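/- In any ideal triangulation of a surface with at least 4 marked points, there exists an arc whose two endpoints are each connected (by arcs or boundary arcs of the triangulation) to at least 3 distinct marked points. -/
import Mathlib


open Finset

/-- In any ideal triangulation (without loops or self-folded triangles) of a surface
with at least `4` marked points, there is an arc (a side `{a, b}` of some triangle)
whose two endpoints `a` and `b` are each connected, by sides of triangles of the
triangulation, to at least `3` distinct marked points.

The triangulation is modelled combinatorially: `T` is a nonempty finite set of
triangles, each a `3`-element subset of the set `V` of marked points, every marked
point lies in some triangle, and the dual adjacency graph (two triangles adjacent
when they share a `2`-element side) is connected. -/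
theorem exists_arc_with_rich_endpoints {V : Type*} [Fintype V] [DecidableEq V]
    (T : Finset (Finset V))
    (hne : T.Nonempty)
    (hcard : ∀ t ∈ T, t.card = 3)
    (hcover : ∀ v : V, ∃ t ∈ T, v ∈ t)
    (hV : 4 ≤ Fintype.card V)
    (hconn : (SimpleGraph.fromRel
      (fun t t' : {t // t ∈ T} => 2 ≤ ((t : Finset V) ∩ (t' : Finset V)).card)).Connected) :
    ∃ t ∈ T, ∃ a ∈ t, ∃ b ∈ t, a ≠ b ∧
      3 ≤ (((T.filter (fun t' => a ∈ t')).biUnion id).erase a).card ∧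
      3 ≤ (((T.filter (fun t' => b ∈ t')).biUnion id).erase b).card := by
  classical
  set N : V → Finset V :=
    fun v => (((T.filter (fun t' => v ∈ t')).biUnion id).erase v) with hNdef
  have hmemN : ∀ v x, (x ∈ N v ↔ (x ≠ v ∧ ∃ t ∈ T, v ∈ t ∧ x ∈ t)) := by
    intro v x
    simp only [hNdef, mem_erase, mem_biUnion, mem_filter, id]
    tauto
  by_cases hrich : ∀ v : V, 3 ≤ (N v).card
  · obtain ⟨t, ht⟩ := hne
    obtain ⟨a, b, c, hab, hac, hbc, rfl⟩ := Finset.card_eq_three.mp (hcard t ht)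
    exact ⟨_, ht, a, by simp, b, by simp, hab, hrich a, hrich b⟩
  · push_neg at hrich
    obtain ⟨v, hv⟩ := hrich
    have hv2 : (N v).card ≤ 2 := by omega
    obtain ⟨t₀, ht₀, hvt₀⟩ := hcover v
    have hcard₀ : (t₀.erase v).card = 2 := by
      rw [Finset.card_erase_of_mem hvt₀, hcard t₀ ht₀]
    obtain ⟨a, b, hab, hE⟩ := Finset.card_eq_two.mp hcard₀
    have haE : a ∈ t₀.erase v := by rw [hE]; simp
    have hbE : b ∈ t₀.erase v := by rw [hE]; simp
    have hat₀ : a ∈ t₀ := Finset.mem_of_mem_erase haE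
    have hbt₀ : b ∈ t₀ := Finset.mem_of_mem_erase hbE
    have hav : a ≠ v := Finset.ne_of_mem_erase haE
    have hbv : b ≠ v := Finset.ne_of_mem_erase hbE
    -- any triangle containing v equals t₀
    have hsubN : ∀ s ∈ T, v ∈ s → s.erase v ⊆ N v := by
      intro s hs hvs x hx
      rw [hmemN]
      exact ⟨Finset.ne_of_mem_erase hx, s, hs, hvs, Finset.mem_of_mem_erase hx⟩
    have huniq : ∀ t ∈ T, v ∈ t → t = t₀ := by
      intro t ht hvt
      have h1 : t.erase v = N v := Finset.eq_of_subset_of_card_le (hsubN t ht hvt)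
        (by rw [Finset.card_erase_of_mem hvt, hcard t ht]; omega)
      have h2 : t₀.erase v = N v := Finset.eq_of_subset_of_card_le (hsubN t₀ ht₀ hvt₀)
        (by rw [hcard₀]; omega)
      have h3 := h1.trans h2.symm
      calc t = insert v (t.erase v) := (Finset.insert_erase hvt).symm
        _ = insert v (t₀.erase v) := by rw [h3]
        _ = t₀ := Finset.insert_erase hvt₀
    -- find a vertex outside t₀, hence another triangle
    obtain ⟨w, hw⟩ : ∃ w, w ∉ t₀ := by
      by_contra h
      push_neg at h
      have h4 : (Finset.univ : Finset V).card ≤ t₀.card :=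
        Finset.card_le_card (fun x _ => h x)
      rw [Finset.card_univ, hcard t₀ ht₀] at h4
      omega
    obtain ⟨t₁, ht₁, hwt₁⟩ := hcover w
    have hne01 : (⟨t₀, ht₀⟩ : {t // t ∈ T}) ≠ ⟨t₁, ht₁⟩ := by
      intro h
      apply hw
      rw [Subtype.mk.injEq] at h
      rw [h]; exact hwt₁
    obtain ⟨p⟩ := hconn.preconnected ⟨t₀, ht₀⟩ ⟨t₁, ht₁⟩
    obtain ⟨t₂, hadj⟩ : ∃ t₂ : {t // t ∈ T},
        (SimpleGraph.fromRel
          (fun t t' : {t // t ∈ T} =>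
            2 ≤ ((t : Finset V) ∩ (t' : Finset V)).card)).Adj ⟨t₀, ht₀⟩ t₂ := by
      cases p with
      | nil => exact absurd rfl hne01
      | cons h _ => exact ⟨_, h⟩
    rw [SimpleGraph.fromRel_adj] at hadj
    obtain ⟨hne02, hr⟩ := hadj
    have hint : 2 ≤ (t₀ ∩ (t₂ : Finset V)).card := by
      rcases hr with h | h
      · exact h
      · rwa [Finset.inter_comm]
    have hvt₂ : v ∉ (t₂ : Finset V) := by
      intro hmem
      exact hne02 (Subtype.ext ((huniq t₂ t₂.2 hmem)).symm)
    have hsubab : t₀ ∩ (t₂ : Finset V) ⊆ {a, b} := by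
      intro x hx
      rw [Finset.mem_inter] at hx
      rw [← hE]
      exact Finset.mem_erase.mpr ⟨fun h => hvt₂ (h ▸ hx.2), hx.1⟩
    have hcardab : ({a, b} : Finset V).card = 2 := by
      rw [Finset.card_insert_of_notMem (by simp [hab]), Finset.card_singleton]
    have heq : t₀ ∩ (t₂ : Finset V) = {a, b} :=
      Finset.eq_of_subset_of_card_le hsubab (by omega)
    have hat₂ : a ∈ (t₂ : Finset V) := by
      have : a ∈ t₀ ∩ (t₂ : Finset V) := by rw [heq]; simp
      exact (Finset.mem_inter.mp this).2
    have hbt₂ : b ∈ (t₂ : Finset V) := by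
      have : b ∈ t₀ ∩ (t₂ : Finset V) := by rw [heq]; simp
      exact (Finset.mem_inter.mp this).2
    have habsub : ({a, b} : Finset V) ⊆ (t₂ : Finset V) := by
      intro x hx
      rcases Finset.mem_insert.mp hx with rfl | hx
      · exact hat₂
      · rw [Finset.mem_singleton] at hx; subst hx; exact hbt₂
    obtain ⟨c, hc⟩ : ((t₂ : Finset V) \ {a, b}).Nonempty := by
      rw [← Finset.card_pos, Finset.card_sdiff_of_subset habsub, hcard t₂ t₂.2, hcardab]
      omega
    rw [Finset.mem_sdiff, Finset.mem_insert, Finset.mem_singleton] at hc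
    push_neg at hc
    obtain ⟨hct₂, hca, hcb⟩ := hc
    have hcv : c ≠ v := fun h => hvt₂ (h ▸ hct₂)
    refine ⟨t₀, ht₀, a, hat₀, b, hbt₀, hab, ?_, ?_⟩
    · show 3 ≤ (N a).card
      have hsub : ({v, b, c} : Finset V) ⊆ N a := by
        intro x hx
        rw [hmemN]
        rcases Finset.mem_insert.mp hx with rfl | hx
        · exact ⟨hav.symm, t₀, ht₀, hat₀, hvt₀⟩
        rcases Finset.mem_insert.mp hx with rfl | hx
        · exact ⟨hab.symm, t₀, ht₀, hat₀, hbt₀⟩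
        · rw [Finset.mem_singleton] at hx; subst hx
          exact ⟨hca, t₂, t₂.2, hat₂, hct₂⟩
      have h3 : ({v, b, c} : Finset V).card = 3 :=
        Finset.card_eq_three.mpr ⟨v, b, c, hbv.symm, hcv.symm, fun h => hcb h.symm, rfl⟩
      calc 3 = ({v, b, c} : Finset V).card := h3.symm
        _ ≤ (N a).card := Finset.card_le_card hsub
    · show 3 ≤ (N b).card
      have hsub : ({v, a, c} : Finset V) ⊆ N b := by
        intro x hx
        rw [hmemN]
        rcases Finset.mem_insert.mp hx with rfl | hx
        · exact ⟨hbv.symm, t₀, ht₀, hbt₀, hvt₀⟩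
        rcases Finset.mem_insert.mp hx with rfl | hx
        · exact ⟨hab, t₀, ht₀, hbt₀, hat₀⟩
        · rw [Finset.mem_singleton] at hx; subst hx
          exact ⟨hcb, t₂, t₂.2, hbt₂, hct₂⟩
      have h3 : ({v, a, c} : Finset V).card = 3 :=
        Finset.card_eq_three.mpr ⟨v, a, c, hav.symm, hcv.symm, fun h => hca h.symm, rfl⟩
      calc 3 = ({v, a, c} : Finset V).card := h3.symm
        _ ≤ (N b).card := Finset.card_le_card hsub
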